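/- Let (A,B) ∈ MC₂ be an infinite pair of multiplicative complements with A(x) = o(x). Then there exist infinitely many positive integers x such that B(x) > √x. -/

import Mathlib

/-!
Suppose `B(x) ≤ √x` for all large `x`. The `k`-th element `b` of `B` then satisfies `k² ≤ b`,
so `∑_{b ∈ B} 1/b` converges, to `C` say, by comparison with `∑ 1/k²`. Every `n ≤ x` is a product `ab`
with `b ∈ B`, `b ≤ x` and `a ∈ A`, `a ≤ x/b`, hence `x ≤ ∑_{b ∈ B, b ≤ x} A(x/b)`. Since
`A(y) ≤ εy + M` for all `y`, this gives `x ≤ εCx + M·B(x) ≤ εCx + M√x`, which fails for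
`ε = 1/(2C)` and `x` large.
-/

open Filter

/-- Counting function: number of elements of `A` that are at most `x`. -/
noncomputable def cnt (A : Set ℕ) (x : ℕ) : ℕ := {a ∈ A | a ≤ x}.ncard

/-- `(A, B)` are multiplicative complements of order 2: both are sets of positive
integers and every positive integer is a product `a * b` with `a ∈ A`, `b ∈ B`. -/
def MC2 (A B : Set ℕ) : Prop :=
  A ⊆ {n | 0 < n} ∧ B ⊆ {n | 0 < n} ∧
    ∀ n : ℕ, 0 < n → ∃ a ∈ A, ∃ b ∈ B, n = a * b

open Finset

lemma cnt_eq_card_filter (A : Set ℕ) [DecidablePred (· ∈ A)] (x : ℕ) :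
    cnt A x = #{a ∈ Iic x | a ∈ A} := by
  rw [cnt, ← Set.ncard_coe_finset]
  congr 1
  ext a
  simp [and_comm]

lemma cnt_mono (A : Set ℕ) : Monotone (cnt A) := by
  classical
  intro x y hxy
  simp only [cnt_eq_card_filter]
  exact card_le_card (filter_subset_filter _ (Iic_subset_Iic.mpr hxy))

lemma cnt_pos_of_mem {A : Set ℕ} {a : ℕ} (ha : a ∈ A) : 0 < cnt A a := by
  classical
  rw [cnt_eq_card_filter]
  exact card_pos.mpr ⟨a, by simpa using ha⟩

lemma strictMonoOn_cnt (A : Set ℕ) : StrictMonoOn (cnt A) A := by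
  classical
  intro a _ b hb hab
  simp only [cnt_eq_card_filter]
  refine card_lt_card ⟨filter_subset_filter _ (Iic_subset_Iic.mpr hab.le), fun hsub => ?_⟩
  have := hsub (by simpa using hb : b ∈ ({a ∈ Iic b | a ∈ A} : Finset ℕ))
  simp only [mem_filter, mem_Iic] at this
  omega

lemma sum_one_div_sq_le_tsum {ι : Type*} {s : Finset ι} {f : ι → ℕ} (hf : Set.InjOn f s) :
    ∑ i ∈ s, 1 / (f i : ℝ) ^ 2 ≤ ∑' k : ℕ, 1 / (k : ℝ) ^ 2 := by
  classical
  rw [← sum_image (f := fun k : ℕ => 1 / (k : ℝ) ^ 2) hf]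
  exact (Real.summable_one_div_nat_pow.mpr one_lt_two).sum_le_tsum _ fun _ _ => by positivity

lemma exists_sum_one_div_le_of_cnt_le_sqrt {B : Set ℕ} [DecidablePred (· ∈ B)]
    (hB : ∀ᶠ y in atTop, (cnt B y : ℝ) ≤ √y) :
    ∃ C > 0, ∀ x, ∑ b ∈ Iic x with b ∈ B, 1 / (b : ℝ) ≤ C := by
  obtain ⟨X₀, hX₀⟩ := eventually_atTop.mp hB
  refine ⟨X₀ + 1 + ∑' k : ℕ, 1 / (k : ℝ) ^ 2, by positivity, fun x => ?_⟩
  set S : Finset ℕ := {b ∈ Iic x | b ∈ B}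
  rw [← sum_filter_add_sum_filter_not S (· < X₀)]
  gcongr
  · calc ∑ b ∈ S.filter (· < X₀), 1 / (b : ℝ)
        ≤ ∑ b ∈ S.filter (· < X₀), 1 := sum_le_sum fun b _ => by
          simpa using Nat.cast_inv_le_one (α := ℝ) b
      _ ≤ ∑ b ∈ Iic X₀, 1 := by
          refine sum_le_sum_of_subset_of_nonneg (fun b hb => ?_) fun _ _ _ => zero_le_one
          simp only [S, mem_filter, mem_Iic] at hb ⊢
          omega
      _ = X₀ + 1 := by simp
  · calc ∑ b ∈ S.filter (¬· < X₀), 1 / (b : ℝ)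
        ≤ ∑ b ∈ S.filter (¬· < X₀), 1 / (cnt B b : ℝ) ^ 2 := by
          refine sum_le_sum fun b hb => ?_
          simp only [S, mem_filter] at hb
          have hpos : (0 : ℝ) < cnt B b := by exact_mod_cast cnt_pos_of_mem hb.1.2
          have hsq : (cnt B b : ℝ) ^ 2 ≤ b := by
            simpa using pow_le_pow_left₀ hpos.le (hX₀ b (not_lt.mp hb.2)) 2
          exact one_div_le_one_div_of_le (by positivity) hsq
      _ ≤ ∑' k : ℕ, 1 / (k : ℝ) ^ 2 :=
          sum_one_div_sq_le_tsum <| (strictMonoOn_cnt B).injOn.mono fun b hb => by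
            simp only [S, coe_filter, mem_filter] at hb
            exact hb.1.2

lemma le_sum_cnt_div {A B : Set ℕ} [DecidablePred (· ∈ B)] (hAB : MC2 A B) (x : ℕ) :
    x ≤ ∑ b ∈ Iic x with b ∈ B, cnt A (x / b) := by
  classical
  obtain ⟨hA, hB, hfac⟩ := hAB
  have hcover : Icc 1 x ⊆
      {b ∈ Iic x | b ∈ B}.biUnion fun b => ({a ∈ Iic (x / b) | a ∈ A}).image (· * b) := by
    intro n hn
    rw [mem_Icc] at hn
    obtain ⟨a, ha, b, hb, rfl⟩ := hfac n hn.1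
    have ha0 : 0 < a := hA ha
    have hb0 : 0 < b := hB hb
    simp only [mem_biUnion, mem_filter, mem_Iic, mem_image]
    exact ⟨b, ⟨(Nat.le_mul_of_pos_left b ha0).trans hn.2, hb⟩, a,
      ⟨(Nat.le_div_iff_mul_le hb0).mpr hn.2, ha⟩, rfl⟩
  calc x = #(Icc 1 x) := by simp
    _ ≤ _ := (card_le_card hcover).trans card_biUnion_le
    _ ≤ _ := sum_le_sum fun b _ => by rw [cnt_eq_card_filter]; exact card_image_le

lemma exists_cnt_le_mul_add {A : Set ℕ}
    (hA : (fun x : ℕ => (cnt A x : ℝ)) =o[atTop] (fun x : ℕ => (x : ℝ))) {ε : ℝ} (hε : 0 < ε) :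
    ∃ M : ℕ, ∀ y, (cnt A y : ℝ) ≤ ε * y + M := by
  obtain ⟨N, hN⟩ := eventually_atTop.mp (hA.def hε)
  refine ⟨cnt A N, fun y => ?_⟩
  rcases le_total N y with hy | hy
  · have := hN y hy
    rw [Real.norm_natCast, Real.norm_natCast] at this
    linarith [(cnt A N).cast_nonneg (α := ℝ)]
  · have : (cnt A y : ℝ) ≤ cnt A N := by exact_mod_cast cnt_mono A hy
    linarith [mul_nonneg hε.le (y.cast_nonneg : (0 : ℝ) ≤ y)]

lemma le_mul_sum_one_div_add {A B : Set ℕ} [DecidablePred (· ∈ B)] (hAB : MC2 A B) {ε M : ℝ}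
    (hε : 0 ≤ ε) (hM : ∀ y, (cnt A y : ℝ) ≤ ε * y + M) (x : ℕ) :
    (x : ℝ) ≤ ε * x * ∑ b ∈ Iic x with b ∈ B, 1 / (b : ℝ) + M * cnt B x := by
  calc (x : ℝ) ≤ ∑ b ∈ Iic x with b ∈ B, (cnt A (x / b) : ℝ) := by
        exact_mod_cast le_sum_cnt_div hAB x
    _ ≤ ∑ b ∈ Iic x with b ∈ B, (ε * x * (1 / (b : ℝ)) + M) := sum_le_sum fun b _ => by
        refine (hM _).trans (add_le_add_left ?_ _)
        rw [mul_one_div, mul_div_assoc]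
        exact mul_le_mul_of_nonneg_left Nat.cast_div_le hε
    _ = ε * x * ∑ b ∈ Iic x with b ∈ B, 1 / (b : ℝ) + M * cnt B x := by
        rw [sum_add_distrib, ← mul_sum, sum_const, cnt_eq_card_filter, nsmul_eq_mul, mul_comm M]

lemma mul_sqrt_lt_half {M x : ℝ} (h : 4 * M ^ 2 < x) : M * √x < x / 2 := by
  have hx : 0 < x := by nlinarith
  have hsq := Real.sq_sqrt hx.le
  have hpos := Real.sqrt_pos.mpr hx
  nlinarith [sq_nonneg (√x - 2 * M)]

theorem stmt_15_general (A B : Set ℕ) (hAB : MC2 A B)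
    (ho : (fun x : ℕ => (cnt A x : ℝ)) =o[Filter.atTop] (fun x : ℕ => (x : ℝ))) :
    {x : ℕ | 0 < x ∧ Real.sqrt x < (cnt B x : ℝ)}.Infinite := by
  classical
  rw [← Nat.frequently_atTop_iff_infinite]
  by_contra hfew
  have hsqrt : ∀ᶠ x : ℕ in atTop, (cnt B x : ℝ) ≤ √x := by
    filter_upwards [not_frequently.mp hfew, eventually_gt_atTop 0] with x hx hx0
    exact not_lt.mp fun h => hx ⟨hx0, h⟩
  obtain ⟨C, hC, hsum⟩ := exists_sum_one_div_le_of_cnt_le_sqrt hsqrt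
  obtain ⟨M, hM⟩ := exists_cnt_le_mul_add ho (by positivity : 0 < 1 / (2 * C))
  obtain ⟨x, hxB, hxM⟩ := (hsqrt.and (eventually_gt_atTop (4 * M ^ 2))).exists
  have hx := le_mul_sum_one_div_add hAB (by positivity) hM x
  have hhalf : 1 / (2 * C) * x * ∑ b ∈ Iic x with b ∈ B, 1 / (b : ℝ) ≤ x / 2 := by
    calc _ ≤ 1 / (2 * C) * x * C := by gcongr; exact hsum x
      _ = x / 2 := by field_simp
  have hlt := mul_sqrt_lt_half (M := M) (x := x) (by exact_mod_cast hxM)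
  linarith [mul_le_mul_of_nonneg_left hxB (M.cast_nonneg : (0 : ℝ) ≤ M)]

theorem stmt_15 (A B : Set ℕ) (hAB : MC2 A B) (hA : A.Infinite) (hB : B.Infinite)
    (ho : (fun x : ℕ => (cnt A x : ℝ)) =o[Filter.atTop] (fun x : ℕ => (x : ℝ))) :
    {x : ℕ | 0 < x ∧ Real.sqrt x < (cnt B x : ℝ)}.Infinite :=
  stmt_15_general A B hAB ho
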